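/- Let W be the infinite dihedral Coxeter group with generators s₁, s₂. Then 𝔈(s₁s₂s₁) = {s₁s₂, s₁s₂s₁, s₁s₂s₁s₂, s₁s₂s₁s₂s₁, …}, i.e. N_{s₁s₂s₁,z,z} ≠ 0 exactly when z is an element of length ≥ 2 whose reduced expression begins with s₁. -/

import Mathlib

open Polynomial

/-- The structure constants of the Iwahori–Hecke algebra: `heckeN T w w' w''` is the
coefficient of `T w''` in `T w * T w'`. -/
noncomputable def heckeN {W H : Type*} [Group W] [Ring H] [Algebra (Polynomial ℤ) H]
    (T : Module.Basis W (Polynomial ℤ) H) (w w' w'' : W) : Polynomial ℤ :=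
  T.repr (T w * T w') w''

/-! The infinite dihedral group acts on `ℤ` with `s₀`, `s₁` acting as the reflections about
`-1/2` and `1/2`, and `z • 0 = ∓ℓ(z)`, the sign being `-` exactly when `z` begins with `s₀`
(induct on the length: a reduced word alternates). So lengths and left descents are read off
from the integer `z • 0`, and elements with different `z • 0` are distinct.
Expanding `T_{s₀} (T_{s₁} (T_{s₀} T_z))` by the rules `T_s T_y = T_{sy}` for `sy > y` and
`T_s T_y = (X - 1) T_y + X T_{sy}` for `sy < y`, the only term that comes back to `T_z` is
`X (X - 1) T_{s₀} T_{s₀ z}`, which occurs exactly when `z` begins with `s₀ s₁`. -/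

namespace CoxeterSystem

section InfiniteDihedral

variable {W : Type*} [Group W] {M : CoxeterMatrix (Fin 2)}

def dihedralSign (i : Fin 2) : ℤ := if i = 0 then -1 else 1

@[simp] lemma dihedralSign_zero : dihedralSign 0 = -1 := rfl

@[simp] lemma dihedralSign_one : dihedralSign 1 = 1 := rfl

lemma dihedralSign_of_ne {i j : Fin 2} (h : j ≠ i) : dihedralSign j = -dihedralSign i := by
  fin_cases i <;> fin_cases j <;> simp_all

def dihedralReflection (i : Fin 2) : Equiv.Perm ℤ :=
  Function.Involutive.toPerm (dihedralSign i - ·) fun x => sub_sub_cancel _ x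

@[simp] lemma dihedralReflection_apply (i : Fin 2) (x : ℤ) :
    dihedralReflection i x = dihedralSign i - x := rfl

lemma isLiftable_dihedralReflection (hM : M 0 1 = 0) : M.IsLiftable dihedralReflection := by
  intro i i'
  rcases eq_or_ne i i' with rfl | h
  · rw [M.diagonal, pow_one]
    ext x
    simp
  · have : M i i' = 0 := by
      fin_cases i <;> fin_cases i' <;> simp_all [M.symmetric 1 0]
    rw [this, pow_zero]

noncomputable def dihedralIndex (hM : M 0 1 = 0) (cs : CoxeterSystem M W) (z : W) : ℤ :=
  cs.lift ⟨dihedralReflection, isLiftable_dihedralReflection hM⟩ z 0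

variable (hM : M 0 1 = 0) (cs : CoxeterSystem M W)

@[simp] lemma dihedralIndex_one : cs.dihedralIndex hM 1 = 0 := by
  simp [dihedralIndex]

@[simp] lemma dihedralIndex_simple_mul (i : Fin 2) (z : W) :
    cs.dihedralIndex hM (cs.simple i * z) = dihedralSign i - cs.dihedralIndex hM z := by
  simp [dihedralIndex, lift_apply_simple]

@[simp] lemma dihedralIndex_simple (i : Fin 2) :
    cs.dihedralIndex hM (cs.simple i) = dihedralSign i := by
  simpa using dihedralIndex_simple_mul hM cs i 1

lemma dihedralIndex_eq_of_isLeftDescent {z : W} {i : Fin 2} (hi : cs.IsLeftDescent z i) :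
    cs.dihedralIndex hM z = dihedralSign i * cs.length z := by
  have hlen := cs.isLeftDescent_iff.mp hi
  rw [← hlen]
  nth_rewrite 1 [← cs.simple_mul_simple_cancel_left (w := z) i]
  rw [dihedralIndex_simple_mul]
  rcases eq_or_ne (cs.simple i * z) 1 with h1 | h1
  · simp [h1]
  · obtain ⟨j, hj⟩ := cs.exists_leftDescent_of_ne_one h1
    have hji : j ≠ i := by
      rintro rfl
      exact cs.isLeftDescent_iff_not_isLeftDescent_mul.mp hi hj
    rw [dihedralIndex_eq_of_isLeftDescent hj, dihedralSign_of_ne hji]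
    push_cast
    ring
termination_by cs.length z
decreasing_by omega

lemma length_eq_natAbs_dihedralIndex (z : W) :
    cs.length z = (cs.dihedralIndex hM z).natAbs := by
  rcases eq_or_ne z 1 with rfl | hz
  · simp
  · obtain ⟨i, hi⟩ := cs.exists_leftDescent_of_ne_one hz
    rw [dihedralIndex_eq_of_isLeftDescent hM cs hi, Int.natAbs_mul]
    fin_cases i <;> simp

lemma isLeftDescent_iff_pos_dihedralSign_mul {z : W} {i : Fin 2} :
    cs.IsLeftDescent z i ↔ 0 < dihedralSign i * cs.dihedralIndex hM z := by
  rw [IsLeftDescent.eq_1, length_eq_natAbs_dihedralIndex hM, length_eq_natAbs_dihedralIndex hM,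
    dihedralIndex_simple_mul]
  fin_cases i <;> simp <;> omega

end InfiniteDihedral

end CoxeterSystem

open CoxeterSystem

section Hecke

variable {B W H : Type*} [Group W] {M : CoxeterMatrix B} [Ring H] [Algebra ℤ[X] H]

structure IsHeckeBasis (cs : CoxeterSystem M W) (T : Module.Basis W ℤ[X] H) : Prop where
  one : T 1 = 1
  mul_of_length_add : ∀ y y' : W, cs.length (y * y') = cs.length y + cs.length y' →
    T y * T y' = T (y * y')
  quadratic : ∀ i : B, (T (cs.simple i) + 1) * (T (cs.simple i) - algebraMap ℤ[X] H X) = 0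

namespace IsHeckeBasis

variable {cs : CoxeterSystem M W} {T : Module.Basis W ℤ[X] H} (hT : IsHeckeBasis cs T)
include hT

lemma simple_mul_of_not_isLeftDescent {i : B} {z : W} (h : ¬cs.IsLeftDescent z i) :
    T (cs.simple i) * T z = T (cs.simple i * z) :=
  hT.mul_of_length_add _ _ (by rw [cs.not_isLeftDescent_iff.mp h, cs.length_simple, add_comm])

lemma simple_mul_simple (i : B) :
    T (cs.simple i) * T (cs.simple i) =
      (X - 1 : ℤ[X]) • T (cs.simple i) + (X : ℤ[X]) • 1 := by
  have h := hT.quadratic i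
  rw [Algebra.algebraMap_eq_smul_one] at h
  simp only [add_mul, mul_sub, one_mul, mul_smul_comm, mul_one] at h
  rw [← sub_eq_zero, ← h]
  module

lemma simple_mul_of_isLeftDescent {i : B} {z : W} (h : cs.IsLeftDescent z i) :
    T (cs.simple i) * T z = (X - 1 : ℤ[X]) • T z + (X : ℤ[X]) • T (cs.simple i * z) := by
  have hz : T (cs.simple i) * T (cs.simple i * z) = T z := by
    simpa only [cs.simple_mul_simple_cancel_left] using
      hT.simple_mul_of_not_isLeftDescent (cs.isLeftDescent_iff_not_isLeftDescent_mul.mp h)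
  calc T (cs.simple i) * T z
      = T (cs.simple i) * T (cs.simple i) * T (cs.simple i * z) := by rw [mul_assoc, hz]
    _ = _ := by rw [hT.simple_mul_simple, add_mul, smul_mul_assoc, smul_mul_assoc, hz, one_mul]

lemma repr_simple_mul_eq_zero {i : B} {y z : W} (hy : y ≠ z) (hsy : cs.simple i * y ≠ z) :
    T.repr (T (cs.simple i) * T y) z = 0 := by
  classical
  by_cases h : cs.IsLeftDescent y i
  · simp [hT.simple_mul_of_isLeftDescent h, hy, hsy]
  · simp [hT.simple_mul_of_not_isLeftDescent h, hsy]

end IsHeckeBasis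

end Hecke

namespace IsHeckeBasis

variable {W H : Type*} [Group W] {M : CoxeterMatrix (Fin 2)} (hM : M 0 1 = 0)
  {cs : CoxeterSystem M W} [Ring H] [Algebra ℤ[X] H] {T : Module.Basis W ℤ[X] H}
  (hT : IsHeckeBasis cs T)
include hM hT

lemma apply_simple_mul_simple_mul_simple :
    T (cs.simple 0 * cs.simple 1 * cs.simple 0) =
      T (cs.simple 0) * (T (cs.simple 1) * T (cs.simple 0)) := by
  have h10 : ¬cs.IsLeftDescent (cs.simple 0) 1 := by
    simp [isLeftDescent_iff_pos_dihedralSign_mul hM]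
  rw [hT.simple_mul_of_not_isLeftDescent h10, hT.simple_mul_of_not_isLeftDescent, mul_assoc]
  simp [isLeftDescent_iff_pos_dihedralSign_mul hM]

lemma heckeN_simple_mul_simple_mul_simple (z : W) :
    heckeN T (cs.simple 0 * cs.simple 1 * cs.simple 0) z z =
      if cs.dihedralIndex hM z ≤ -2 then X * (X - 1) else 0 := by
  have descent {i : Fin 2} {y : W} : cs.IsLeftDescent y i ↔
      0 < dihedralSign i * cs.dihedralIndex hM y :=
    isLeftDescent_iff_pos_dihedralSign_mul hM cs
  have ne {y : W} (h : cs.dihedralIndex hM y ≠ cs.dihedralIndex hM z) : y ≠ z :=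
    mt (congrArg _) h
  rw [heckeN, hT.apply_simple_mul_simple_mul_simple hM, mul_assoc, mul_assoc]
  rcases lt_or_ge (cs.dihedralIndex hM z) 0 with hneg | hnonneg
  · have hz0 : cs.IsLeftDescent z 0 := descent.mpr (by simpa)
    have hz1 : ¬cs.IsLeftDescent z 1 := by simp [descent]; omega
    simp only [hT.simple_mul_of_isLeftDescent hz0, hT.simple_mul_of_not_isLeftDescent hz1,
      mul_add, mul_smul_comm, map_add, map_smul, Finsupp.add_apply, Finsupp.smul_apply,
      smul_eq_mul]
    rw [hT.repr_simple_mul_eq_zero (ne (by simp; omega)) (ne (by simp; omega)), mul_zero,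
      zero_add]
    split_ifs with h
    · have hsz0 : ¬cs.IsLeftDescent (cs.simple 0 * z) 0 := by simp [descent]; omega
      have hsz1 : cs.IsLeftDescent (cs.simple 0 * z) 1 := by simp [descent]; omega
      simp only [hT.simple_mul_of_isLeftDescent hsz1, hT.simple_mul_of_not_isLeftDescent hsz0,
        mul_add, mul_smul_comm, map_add, map_smul, Finsupp.add_apply, Finsupp.smul_apply,
        smul_eq_mul, cs.simple_mul_simple_cancel_left, Module.Basis.repr_self]
      rw [hT.repr_simple_mul_eq_zero (ne (by simp; omega)) (ne (by simp; omega))]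
      simp
    · have hsz1 : ¬cs.IsLeftDescent (cs.simple 0 * z) 1 := by simp [descent]; omega
      rw [hT.simple_mul_of_not_isLeftDescent hsz1,
        hT.repr_simple_mul_eq_zero (ne (by simp; omega)) (ne (by simp; omega)), mul_zero]
  · rw [hT.simple_mul_of_not_isLeftDescent (by simpa [descent]),
      hT.simple_mul_of_not_isLeftDescent (by simp [descent]; omega),
      hT.repr_simple_mul_eq_zero (ne (by simp; omega)) (ne (by simp; omega)), if_neg (by omega)]

end IsHeckeBasis

variable {B W H : Type*} [Group W] {M : CoxeterMatrix B}

/-- In the infinite dihedral Coxeter group, `𝔈(s₁s₂s₁)` consists exactly of the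
elements of length at least `2` whose reduced expression begins with `s₁`
(i.e. with `l(s₁ z) < l(z)`). -/
theorem stmt_8 {W H : Type*} [Group W] {M : CoxeterMatrix (Fin 2)} (hM : M 0 1 = 0)
    (cs : CoxeterSystem M W)
    [Ring H] [Algebra (Polynomial ℤ) H] (T : Module.Basis W (Polynomial ℤ) H)
    (hone : T 1 = 1)
    (hmul : ∀ y y' : W, cs.length (y * y') = cs.length y + cs.length y' →
      T y * T y' = T (y * y'))
    (hquad : ∀ i : Fin 2, (T (cs.simple i) + 1) *
      (T (cs.simple i) - algebraMap (Polynomial ℤ) H X) = 0)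
    (w : W) (hw : w = cs.simple 0 * cs.simple 1 * cs.simple 0) (z : W) :
    heckeN T w z z ≠ 0 ↔
      2 ≤ cs.length z ∧ cs.length (cs.simple 0 * z) < cs.length z := by
  have hT : IsHeckeBasis cs T := ⟨hone, hmul, hquad⟩
  have hX : (X * (X - 1) : ℤ[X]) ≠ 0 := mul_ne_zero X_ne_zero (X_sub_C_ne_zero 1)
  rw [hw, hT.heckeN_simple_mul_simple_mul_simple hM, length_eq_natAbs_dihedralIndex hM,
    length_eq_natAbs_dihedralIndex hM, dihedralIndex_simple_mul]
  split_ifs <;> simp [hX] <;> omega
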